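/- arXiv:2110.02579 — 2 statements merged into one kernel-verified Lean document; each statement's English description precedes it below -/
import Mathlib

section
/- Let n ≥ 2 and let λ_0 > λ_1 > … > λ_{n−1} > 0 be real numbers with Σ_{j=0}^{n−1} λ_j = n. Define ζ_I : [0, λ_0] → ℝ by ζ_I(θ) = (1/(2 ln 2)) · Σ_{j : λ_j > θ} ( (1/λ_j)(1 − θ/λ_j) + θ/λ_j − 1 ). Let k̄ be the largest index k such that λ_k ≥ 1. Then there exists θ with 0 < θ < λ_{k̄} such that ζ_I(θ) = 0. -/
open scoped Classical

/-- The anomaly-agnostic distinguishability measure for a white anomaly: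
`ζ_I(θ) = (1/(2 ln 2)) Σ_{j : λ_j > θ} ((1/λ_j)(1 − θ/λ_j) + θ/λ_j − 1)`. -/
noncomputable def zetaI (n : ℕ) (lam : Fin n → ℝ) (θ : ℝ) : ℝ :=
  (1 / (2 * Real.log 2)) *
    ∑ j ∈ Finset.univ.filter (fun j : Fin n => θ < lam j),
      ((1 / lam j) * (1 - θ / lam j) + θ / lam j - 1)

/-!
Each surviving summand factors as `(1/λ_j − 1)(1 − θ/λ_j)`, so `ζ_I` is continuous in `θ`.
At `θ = 0` all components survive and `Σ (1/λ_j − 1) = Σ (λ_j − 1)²/λ_j > 0` because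
`Σ λ_j = n` and the `λ_j` are not all `1`. Just below `λ_k̄` only components with `λ_j ≥ λ_k̄ ≥ 1`
survive; their summands are `≤ 0`, and the one of the largest `λ_j`, which exceeds `1`,
is `< 0`. The intermediate value theorem gives the zero.
-/

lemma sum_inv_sub_one_eq_sum_sq_div {ι : Type*} [Fintype ι] (f : ι → ℝ) (hf : ∀ i, f i ≠ 0)
    (hsum : ∑ i, f i = Fintype.card ι) :
    ∑ i, (1 / f i - 1) = ∑ i, (f i - 1) ^ 2 / f i := by
  have hcentred : ∑ i, (f i - 1) = 0 := by
    simp [Finset.sum_sub_distrib, hsum]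
  rw [← add_zero (∑ i, (1 / f i - 1)), ← hcentred, ← Finset.sum_add_distrib]
  refine Finset.sum_congr rfl fun i _ => ?_
  field_simp [hf i]
  ring

lemma exists_one_lt_of_sum_eq_card {ι : Type*} [Fintype ι] {f : ι → ℝ}
    (hsum : ∑ i, f i = Fintype.card ι) {i : ι} (hi : f i ≠ 1) : ∃ j, 1 < f j := by
  by_contra! hle
  have : ∑ j, f j < ∑ _j : ι, (1 : ℝ) :=
    Finset.sum_lt_sum (fun j _ => hle j) ⟨i, Finset.mem_univ _, lt_of_le_of_ne (hle i) hi⟩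
  simp [hsum] at this

lemma exists_pos_lt_forall_lt_imp_le {ι : Type*} [Finite ι] (f : ι → ℝ) {t : ℝ} (ht : 0 < t) :
    ∃ θ, 0 < θ ∧ θ < t ∧ ∀ i, θ < f i → t ≤ f i := by
  have hgap : ∀ᶠ θ in nhdsWithin t (Set.Iio t), ∀ i, θ < f i → t ≤ f i := by
    refine Filter.eventually_all.2 fun i => ?_
    rcases le_or_gt t (f i) with hle | hlt
    · exact Filter.Eventually.of_forall fun _ _ => hle
    · filter_upwards [Ioo_mem_nhdsLT hlt] with θ hθ h
      exact absurd h (not_lt.2 hθ.1.le)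
  obtain ⟨θ, ⟨hθpos, hθt⟩, hθ⟩ := (Filter.Eventually.and (Ioo_mem_nhdsLT ht) hgap).exists
  exact ⟨θ, hθpos, hθt, hθ⟩

lemma zetaI_summand_eq (l θ : ℝ) :
    (1 / l) * (1 - θ / l) + θ / l - 1 = (1 / l - 1) * (1 - θ / l) := by
  ring

lemma zetaI_eq_sum_mul_max {n : ℕ} {lam : Fin n → ℝ} (hpos : ∀ j, 0 < lam j) (θ : ℝ) :
    zetaI n lam θ = (1 / (2 * Real.log 2)) * ∑ j, (1 / lam j - 1) * max (1 - θ / lam j) 0 := by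
  rw [zetaI, Finset.sum_filter]
  congr 1
  refine Finset.sum_congr rfl fun j _ => ?_
  split_ifs with hj
  · rw [zetaI_summand_eq, max_eq_left (sub_nonneg.2 ((div_lt_one (hpos j)).2 hj).le)]
  · rw [max_eq_right (sub_nonpos.2 ((one_le_div (hpos j)).2 (not_lt.1 hj))), mul_zero]

lemma continuous_zetaI {n : ℕ} {lam : Fin n → ℝ} (hpos : ∀ j, 0 < lam j) :
    Continuous (zetaI n lam) := by
  simp_rw [funext (zetaI_eq_sum_mul_max hpos)]
  fun_prop

lemma zetaI_zero_pos {n : ℕ} {lam : Fin n → ℝ} (hpos : ∀ j, 0 < lam j)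
    (hsum : ∑ j, lam j = n) {i : Fin n} (hi : lam i ≠ 1) : 0 < zetaI n lam 0 := by
  have hall : Finset.univ.filter (fun j : Fin n => 0 < lam j) = Finset.univ :=
    Finset.filter_true_of_mem fun j _ => hpos j
  have hterms : ∑ j, (lam j - 1) ^ 2 / lam j > 0 :=
    Finset.sum_pos' (fun j _ => div_nonneg (sq_nonneg _) (hpos j).le)
      ⟨i, Finset.mem_univ _, div_pos (sq_pos_of_ne_zero (sub_ne_zero.2 hi)) (hpos i)⟩
  have hlog : 0 < Real.log 2 := Real.log_pos one_lt_two
  rw [zetaI, hall]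
  simp only [zero_div, sub_zero, mul_one, add_zero]
  rw [sum_inv_sub_one_eq_sum_sq_div lam (fun j => (hpos j).ne') (by simpa using hsum)]
  positivity

lemma zetaI_neg {n : ℕ} {lam : Fin n → ℝ} {θ : ℝ} (hsurv : ∀ j, θ < lam j → 1 ≤ lam j)
    {j₀ : Fin n} (hj₀ : θ < lam j₀) (hone : 1 < lam j₀) : zetaI n lam θ < 0 := by
  have hfactor : ∀ j, θ < lam j → 0 < 1 - θ / lam j := fun j hj =>
    sub_pos.2 ((div_lt_one (one_pos.trans_le (hsurv j hj))).2 hj)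
  have hsum : ∑ j ∈ Finset.univ.filter (fun j : Fin n => θ < lam j),
      ((1 / lam j) * (1 - θ / lam j) + θ / lam j - 1) < 0 := by
    simp_rw [zetaI_summand_eq]
    refine Finset.sum_neg' (fun j hj => ?_) ⟨j₀, by simpa using hj₀, ?_⟩
    · have hj : θ < lam j := (Finset.mem_filter.1 hj).2
      exact mul_nonpos_of_nonpos_of_nonneg
        (sub_nonpos.2 (div_le_one_of_le₀ (hsurv j hj) (by linarith [hsurv j hj])))
        (hfactor j hj).le
    · exact mul_neg_of_neg_of_pos (sub_neg.2 ((div_lt_one (by linarith)).2 hone)) (hfactor j₀ hj₀)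
  have hlog : 0 < Real.log 2 := Real.log_pos one_lt_two
  exact mul_neg_of_pos_of_neg (by positivity) hsum

theorem stmt_4_general (n : ℕ) (hn : 2 ≤ n) (lam : Fin n → ℝ)
    (hanti : ∀ i j : Fin n, i < j → lam j < lam i)
    (hpos : ∀ j, 0 < lam j)
    (hsum : ∑ j, lam j = (n : ℝ))
    (kbar : Fin n) (hkbar : 1 ≤ lam kbar) :
    ∃ θ : ℝ, 0 < θ ∧ θ < lam kbar ∧ zetaI n lam θ = 0 := by
  have hnot_all_one : ∃ i, lam i ≠ 1 := by
    by_contra! h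
    have h01 := hanti ⟨0, by omega⟩ ⟨1, by omega⟩ (Fin.mk_lt_mk.2 one_pos)
    rw [h, h] at h01
    exact lt_irrefl _ h01
  obtain ⟨i, hi⟩ := hnot_all_one
  have : Nonempty (Fin n) := ⟨kbar⟩
  obtain ⟨jmax, hjmax⟩ := Finite.exists_max lam
  obtain ⟨j, hj⟩ := exists_one_lt_of_sum_eq_card (by simpa using hsum) hi
  obtain ⟨θ₁, hθ₁pos, hθ₁, hgap⟩ := exists_pos_lt_forall_lt_imp_le lam (hpos kbar)
  have hneg : zetaI n lam θ₁ < 0 :=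
    zetaI_neg (fun j hj => hkbar.trans (hgap j hj)) (hθ₁.trans_le (hjmax kbar))
      (hj.trans_le (hjmax j))
  obtain ⟨θ, ⟨hθpos, hθθ₁⟩, hzero⟩ := intermediate_value_Ioo' hθ₁pos.le
    (continuous_zetaI hpos).continuousOn ⟨hneg, zetaI_zero_pos hpos hsum hi⟩
  exact ⟨θ, hθpos, hθθ₁.trans hθ₁, hzero⟩

/-- If `λ_0 > λ_1 > … > λ_{n−1} > 0` sum to `n` and `k̄` is the largest index
with `λ_k̄ ≥ 1`, then `ζ_I` vanishes at some `θ` with `0 < θ < λ_k̄`. -/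
theorem stmt_4 (n : ℕ) (hn : 2 ≤ n) (lam : Fin n → ℝ)
    (hanti : ∀ i j : Fin n, i < j → lam j < lam i)
    (hpos : ∀ j, 0 < lam j)
    (hsum : ∑ j, lam j = (n : ℝ))
    (kbar : Fin n) (hkbar : 1 ≤ lam kbar)
    (hkmax : ∀ k : Fin n, 1 ≤ lam k → k ≤ kbar) :
    ∃ θ : ℝ, 0 < θ ∧ θ < lam kbar ∧ zetaI n lam θ = 0 :=
  stmt_4_general n hn lam hanti hpos hsum kbar hkbar
end

section
/- Let n ≥ 2 and let λ_0 > λ_1 > … > λ_{n−1} > 0 be real numbers with Σ_{j=0}^{n−1} λ_j = n. Define ζ_I : [0, λ_0] → ℝ by ζ_I(θ) = (1/(2 ln 2)) · Σ_{j : λ_j > θ} ( (1/λ_j)(1 − θ/λ_j) + θ/λ_j − 1 ). Let k̄ be the largest index k such that λ_k ≥ 1. Then ζ_I(λ_0) = 0 and ζ_I(θ) < 0 for every θ in the open interval (λ_{k̄}, λ_0). -/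
open scoped Classical

/- Each summand factors as `(1/λ - 1)(1 - θ/λ)`, so it is negative as soon as `1 ≤ θ < λ`.
At `θ = λ_0` no component survives compression, and above `λ_k̄ ≥ 1` every surviving
component has a negative summand, with `λ_0` always among them. -/

theorem zetaI_summand_neg {θ x : ℝ} (hθ : 1 ≤ θ) (hθx : θ < x) :
    (1 / x) * (1 - θ / x) + θ / x - 1 < 0 := by
  have hx : 0 < x := by linarith
  have hfactor : (1 / x) * (1 - θ / x) + θ / x - 1 = (1 / x - 1) * (1 - θ / x) := by ring
  have hinv : 1 / x < 1 := (div_lt_one hx).mpr (by linarith)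
  have hratio : θ / x < 1 := (div_lt_one hx).mpr hθx
  rw [hfactor]
  exact mul_neg_of_neg_of_pos (by linarith) (by linarith)

theorem zetaI_eq_zero_of_forall_le {n : ℕ} {lam : Fin n → ℝ} {θ : ℝ}
    (h : ∀ j, lam j ≤ θ) : zetaI n lam θ = 0 := by
  have hempty : Finset.univ.filter (fun j : Fin n => θ < lam j) = ∅ :=
    Finset.filter_eq_empty_iff.mpr fun j _ => not_lt.mpr (h j)
  simp [zetaI, hempty]

theorem zetaI_neg_of_one_le {n : ℕ} {lam : Fin n → ℝ} {θ : ℝ} (hθ : 1 ≤ θ)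
    (hsurvivor : ∃ j, θ < lam j) : zetaI n lam θ < 0 := by
  have hscale : (0 : ℝ) < 1 / (2 * Real.log 2) := by
    have := Real.log_pos one_lt_two
    positivity
  obtain ⟨j₀, hj₀⟩ := hsurvivor
  refine mul_neg_of_pos_of_neg hscale (Finset.sum_neg (fun j hj => ?_) ⟨j₀, by simpa using hj₀⟩)
  exact zetaI_summand_neg hθ (Finset.mem_filter.mp hj).2

/-- If `λ_0 > λ_1 > … > λ_{n−1} > 0` sum to `n` and `k̄` is the largest index
with `λ_k̄ ≥ 1`, then `ζ_I(λ_0) = 0` and `ζ_I(θ) < 0` for `θ ∈ (λ_k̄, λ_0)`. -/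
theorem stmt_6 (n : ℕ) (hn : 2 ≤ n) (lam : Fin n → ℝ)
    (hanti : ∀ i j : Fin n, i < j → lam j < lam i)
    (kbar : Fin n) (hkbar : 1 ≤ lam kbar) :
    zetaI n lam (lam ⟨0, by omega⟩) = 0 ∧
      ∀ θ ∈ Set.Ioo (lam kbar) (lam ⟨0, by omega⟩), zetaI n lam θ < 0 := by
  have hstrict : StrictAnti lam := hanti
  refine ⟨zetaI_eq_zero_of_forall_le fun j => hstrict.antitone (Nat.zero_le j), ?_⟩
  rintro θ ⟨hkθ, hθ0⟩
  exact zetaI_neg_of_one_le (hkbar.trans hkθ.le) ⟨_, hθ0⟩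
end
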